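/- arXiv:1805.03259 — 10 statements merged into one kernel-verified Lean document; each statement's English description precedes it below -/
import Mathlib

section
/- For every odd positive integer k, the punctured interval T_k tiles ℤ^3. -/
/-- The punctured interval `T_k = {-k, …, -1, 1, …, k} ⊆ ℤ`. -/
def puncturedInterval (k : ℕ) : Set ℤ := {t : ℤ | t ≠ 0 ∧ -(k : ℤ) ≤ t ∧ t ≤ k}

/-- A copy of `T_k` in `ℤ^d`: a translate of `T_k` along a coordinate direction. -/
def IsCopy (k : ℕ) {d : ℕ} (C : Set (Fin d → ℤ)) : Prop :=
  ∃ (a : Fin d → ℤ) (i : Fin d),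
    C = (fun t : ℤ => a + t • Pi.single i (1 : ℤ)) '' puncturedInterval k

/-- `T_k` tiles `Y ⊆ ℤ^d`: `Y` is a disjoint union of copies of `T_k`. -/
def Tiles (k : ℕ) {d : ℕ} (Y : Set (Fin d → ℤ)) : Prop :=
  ∃ 𝒞 : Set (Set (Fin d → ℤ)),
    (∀ C ∈ 𝒞, IsCopy k C) ∧ 𝒞.PairwiseDisjoint id ∧ ⋃₀ 𝒞 = Y

/-!
The form `p ↦ k p₀ + (k + 1) p₁ + 2k p₂` maps `ℤ³` onto `ℤ / 4k(k+1)` and a copy of `T_k` in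
direction `i` onto a set `s + aᵢ T_k` with `aᵢ ∈ {k, k + 1, 2k}`; hence the preimage of a tiling
of the cyclic group by such sets is a (periodic) tiling of `ℤ³`. In each of two layers take
`k - 1` tiles of step `k`, one of step `k + 1` and one of step `2k`: these are `2(k + 1)` sets of
`2k` cells, exactly `4k(k+1)` in all, so it is enough that they are pairwise disjoint. That is
checked by reducing modulo `k` and `k + 1` and comparing sizes; the oddness of `k` enters through
parity arguments for the tiles of step `2k`.
-/

def copyAt (k : ℕ) {d : ℕ} (a : Fin d → ℤ) (i : Fin d) : Set (Fin d → ℤ) :=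
  (fun t : ℤ => a + t • Pi.single i (1 : ℤ)) '' puncturedInterval k

lemma isCopy_copyAt (k : ℕ) {d : ℕ} (a : Fin d → ℤ) (i : Fin d) : IsCopy k (copyAt k a i) :=
  ⟨a, i, rfl⟩

theorem tiles_univ_of_bijective {k d : ℕ} {G ι : Type*} [AddCommGroup G] (g : Fin d → G)
    (centre : ι → G) (dir : ι → Fin d)
    (h : Function.Bijective fun p : ι × puncturedInterval k =>
      centre p.1 + (p.2 : ℤ) • g (dir p.1)) :
    Tiles k (Set.univ : Set (Fin d → ℤ)) := by
  set φ := Fintype.linearCombination ℤ g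
  have φ_step (a : Fin d → ℤ) (i : Fin d) (t : ℤ) :
      φ (a + t • Pi.single i 1) = φ a + t • g i := by
    rw [map_add, map_zsmul, Fintype.linearCombination_apply_single, one_smul]
  refine ⟨{C | ∃ a c, φ a = centre c ∧ C = copyAt k a (dir c)}, ?_, ?_, ?_⟩
  · rintro C ⟨a, c, -, rfl⟩
    exact isCopy_copyAt k a (dir c)
  · rintro _ ⟨a, c, hac, rfl⟩ _ ⟨a', c', hac', rfl⟩ hne
    refine Set.disjoint_left.mpr ?_
    rintro p ⟨t, ht, rfl⟩ ⟨t', ht', hp⟩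
    have hφ := congrArg φ hp
    rw [φ_step, φ_step, hac, hac'] at hφ
    obtain ⟨rfl, htt'⟩ := Prod.ext_iff.mp (h.1 (a₁ := (c', ⟨t', ht'⟩)) (a₂ := (c, ⟨t, ht⟩)) hφ)
    obtain rfl : t' = t := congrArg Subtype.val htt'
    exact hne (by rw [add_right_cancel hp])
  · refine Set.eq_univ_of_forall fun p => ?_
    obtain ⟨⟨c, t, ht⟩, hct⟩ := h.2 (φ p)
    refine ⟨copyAt k (p - t • Pi.single (dir c) 1) (dir c),
      ⟨_, c, ?_, rfl⟩, t, ht, sub_add_cancel p _⟩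
    have hstep := φ_step (p - t • Pi.single (dir c) 1) (dir c) t
    rw [sub_add_cancel, ← hct] at hstep
    exact (add_right_cancel hstep).symm

lemma Nat.card_puncturedInterval (k : ℕ) : Nat.card (puncturedInterval k) = 2 * k := by
  have h : puncturedInterval k = ↑((Finset.Icc (-k : ℤ) k).erase 0) := by
    ext t
    simp only [puncturedInterval, Set.mem_ofPred_eq, Finset.coe_erase, Finset.coe_Icc,
      Set.mem_sdiff, Set.mem_Icc, Set.mem_singleton_iff]
    tauto
  rw [h, Nat.card_coe_set_eq, Set.ncard_coe_finset, Finset.card_erase_of_mem (by simp),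
    Int.card_Icc]
  omega

/-- In the tiling of `ℤ / 4k(k+1)`, the cell at offset `t ∈ T_k` of the `j`-th tile of step `k`
(`cellX`), of the tile of step `k + 1` (`cellY`) and of the tile of step `2k` (`cellZ`) in layer
`e ∈ {0, 1}`. -/
def cellX (k : ℕ) (e j t : ℤ) : ℤ := k * t + (k + 1) * j + k + (2 * k ^ 2 + 3 * k) * e

def cellY (k : ℕ) (e t : ℤ) : ℤ := (k + 1) * t + k ^ 2 + k - 1 + (k ^ 2 + 2 * k) * e

def cellZ (k : ℕ) (e t : ℤ) : ℤ := 2 * k * t + k ^ 2 + 2 * k - 1 + (3 * k ^ 2 + 2 * k) * e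

section cells

variable {k : ℕ} {e e' j j' t t' : ℤ}

lemma eq_of_dvd_cellX_sub_cellX (he : e = 0 ∨ e = 1) (he' : e' = 0 ∨ e' = 1)
    (hj₀ : 0 ≤ j) (hj : j + 2 ≤ k) (hj₀' : 0 ≤ j') (hj' : j' + 2 ≤ k)
    (ht : t ∈ puncturedInterval k) (ht' : t' ∈ puncturedInterval k)
    (h : (4 * k * (k + 1) : ℤ) ∣ cellX k e j t - cellX k e' j' t') :
    e = e' ∧ j = j' ∧ t = t' := by
  obtain ⟨c, hc⟩ := h
  obtain ⟨-, ht₁, ht₂⟩ := ht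
  obtain ⟨-, ht₁', ht₂'⟩ := ht'
  unfold cellX at hc
  obtain rfl : j = j' := by
    have h : j - j' = k * (4 * (k + 1) * c - (t - t') - (j - j') - (2 * k + 3) * (e - e')) := by
      linear_combination hc
    linarith [Int.eq_zero_of_abs_lt_dvd ⟨_, h⟩ (abs_lt.2 ⟨by linarith, by linarith⟩)]
  have hy : t - t' + (2 * k + 3) * (e - e') = 0 := by
    have h : t - t' + (2 * k + 3) * (e - e') = 4 * (k + 1) * c :=
      mul_left_cancel₀ (show (k : ℤ) ≠ 0 by omega) (by linear_combination hc)
    refine Int.eq_zero_of_abs_lt_dvd ⟨c, h⟩ (abs_lt.2 ⟨?_, ?_⟩) <;>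
      rcases he with rfl | rfl <;> rcases he' with rfl | rfl <;> linarith
  refine ⟨?_, rfl, ?_⟩ <;> rcases he with rfl | rfl <;> rcases he' with rfl | rfl <;> linarith

lemma not_dvd_cellX_sub_cellY (he : e = 0 ∨ e = 1) (he' : e' = 0 ∨ e' = 1)
    (hj₀ : 0 ≤ j) (hj : j + 2 ≤ k) (ht : t ∈ puncturedInterval k)
    (ht' : t' ∈ puncturedInterval k) :
    ¬ (4 * k * (k + 1) : ℤ) ∣ cellX k e j t - cellY k e' t' := by
  rintro ⟨c, hc⟩
  obtain ⟨ht₀, ht₁, ht₂⟩ := ht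
  obtain ⟨-, ht₁', ht₂'⟩ := ht'
  unfold cellX cellY at hc
  have hk : (0 : ℤ) < k := by omega
  obtain ⟨v, hv⟩ : (k : ℤ) ∣ t' - j - 1 :=
    ⟨t + j - t' + 1 + (2 * k + 3) * e - (k + 1) - (k + 2) * e' - 4 * (k + 1) * c, by
      linear_combination -hc⟩
  have hv' : v = -1 ∨ v = 0 := by
    have : -2 < v := lt_of_mul_lt_mul_left (a := (k : ℤ)) (by linarith) hk.le
    have : v < 1 := lt_of_mul_lt_mul_left (a := (k : ℤ)) (by linarith) hk.le
    omega
  have hy : t - (k + 1) * (v + 1) + (2 * k + 3) * e - (k + 2) * e' = 4 * (k + 1) * c :=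
    mul_left_cancel₀ hk.ne' (by linear_combination hc + (k + 1) * hv)
  have hy₀ := Int.eq_zero_of_abs_lt_dvd ⟨c, hy⟩ (abs_lt.2 ⟨?_, ?_⟩)
  all_goals rcases hv' with rfl | rfl <;> rcases he with rfl | rfl <;>
    rcases he' with rfl | rfl <;> first | linarith | exact ht₀ (by linarith)

lemma not_dvd_cellX_sub_cellZ (hj₀ : 0 ≤ j) (hj : j + 2 ≤ k) :
    ¬ (4 * k * (k + 1) : ℤ) ∣ cellX k e j t - cellZ k e' t' := by
  rintro ⟨c, hc⟩
  unfold cellX cellZ at hc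
  have h : j + 1 = k * (4 * (k + 1) * c - (t + j + 1 + (2 * k + 3) * e - 2 * t' - (k + 2)
      - (3 * k + 2) * e')) := by
    linear_combination hc
  linarith [Int.eq_zero_of_abs_lt_dvd ⟨_, h⟩ (abs_lt.2 ⟨by linarith, by linarith⟩)]

lemma eq_of_dvd_cellY_sub_cellY (he : e = 0 ∨ e = 1) (he' : e' = 0 ∨ e' = 1)
    (ht : t ∈ puncturedInterval k) (ht' : t' ∈ puncturedInterval k)
    (h : (4 * k * (k + 1) : ℤ) ∣ cellY k e t - cellY k e' t') : e = e' ∧ t = t' := by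
  obtain ⟨c, hc⟩ := h
  obtain ⟨ht₀, ht₁, ht₂⟩ := ht
  obtain ⟨-, ht₁', ht₂'⟩ := ht'
  have hk : (1 : ℤ) ≤ k := by omega
  unfold cellY at hc
  obtain rfl : e = e' := by
    have h : e' - e = (k + 1) * (4 * k * c - (t - t') - (k + 1) * (e - e')) := by
      linear_combination hc
    have := Int.eq_zero_of_abs_lt_dvd ⟨_, h⟩ (abs_lt.2 ⟨?_, ?_⟩)
    all_goals rcases he with rfl | rfl <;> rcases he' with rfl | rfl <;> linarith
  have h : t - t' = 4 * k * c :=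
    mul_left_cancel₀ (show (k : ℤ) + 1 ≠ 0 by omega) (by linear_combination hc)
  exact ⟨rfl, by linarith [Int.eq_zero_of_abs_lt_dvd ⟨c, h⟩ (abs_lt.2 ⟨by linarith, by linarith⟩)]⟩

lemma not_dvd_cellY_sub_cellZ (hk : Odd k) (he : e = 0 ∨ e = 1) (he' : e' = 0 ∨ e' = 1)
    (ht : t ∈ puncturedInterval k) (ht' : t' ∈ puncturedInterval k) :
    ¬ (4 * k * (k + 1) : ℤ) ∣ cellY k e t - cellZ k e' t' := by
  rintro ⟨c, hc⟩
  obtain ⟨ht₀, ht₁, ht₂⟩ := ht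
  obtain ⟨ht₀', ht₁', ht₂'⟩ := ht'
  unfold cellY cellZ at hc
  have hk₀ : (0 : ℤ) < k := by omega
  have he₀ : 0 ≤ e ∧ e ≤ 1 := by omega
  have he₀' : 0 ≤ e' ∧ e' ≤ 1 := by omega
  obtain ⟨σ, hσ⟩ : (k : ℤ) ∣ t :=
    ⟨4 * (k + 1) * c - (t - 2 * t' - 1 + (k + 2) * e - (3 * k + 2) * e'), by
      linear_combination hc⟩
  obtain ⟨τ, hτ⟩ : (k + 1 : ℤ) ∣ 2 * t' + 1 - e - e' :=
    ⟨4 * k * c - (t - 2 * t' - 1 + (k + 1) * e - (3 * k - 1) * e'), by linear_combination hc⟩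
  have hσ' : σ = -1 ∨ σ = 1 := by
    have : -2 < σ := lt_of_mul_lt_mul_left (a := (k : ℤ)) (by linarith) hk₀.le
    have : σ < 2 := lt_of_mul_lt_mul_left (a := (k : ℤ)) (by linarith) hk₀.le
    have : σ ≠ 0 := by rintro rfl; exact ht₀ (by simpa using hσ)
    omega
  have hτ' : -2 < τ ∧ τ < 2 :=
    ⟨lt_of_mul_lt_mul_left (a := (k : ℤ) + 1) (by linarith) (by linarith),
      lt_of_mul_lt_mul_left (a := (k : ℤ) + 1) (by linarith) (by linarith)⟩
  -- `k + 1` is even, so `2t' + 1 - e - e'` is even and `e ≠ e'`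
  have h2 : (2 : ℤ) ∣ 2 * t' + 1 - e - e' :=
    hτ ▸ (even_iff_two_dvd.mp (hk.natCast (R := ℤ)).add_one).mul_right τ
  have hτ₀ : τ ≠ 0 := by rintro rfl; omega
  have key : σ - τ + e - 3 * e' = 4 * c :=
    mul_left_cancel₀ (show (k : ℤ) * (k + 1) ≠ 0 by positivity)
      (by linear_combination hc - (k + 1) * hσ + k * hτ)
  -- `σ = ±1`, `τ = ±1` and `e ≠ e'`: the left side is odd
  omega

lemma eq_of_dvd_cellZ_sub_cellZ (hk : Odd k) (he : e = 0 ∨ e = 1) (he' : e' = 0 ∨ e' = 1)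
    (ht : t ∈ puncturedInterval k) (ht' : t' ∈ puncturedInterval k)
    (h : (4 * k * (k + 1) : ℤ) ∣ cellZ k e t - cellZ k e' t') : e = e' ∧ t = t' := by
  obtain ⟨c, hc⟩ := h
  obtain ⟨-, ht₁, ht₂⟩ := ht
  obtain ⟨-, ht₁', ht₂'⟩ := ht'
  unfold cellZ at hc
  have hk₀ : (k : ℤ) ≠ 0 := by have := hk.pos; omega
  have hy : 2 * (t - t') + (3 * k + 2) * (e - e') = 4 * (k + 1) * c :=
    mul_left_cancel₀ hk₀ (by linear_combination hc)
  -- `3k + 2` is odd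
  obtain rfl : e = e' := by
    have h2 : (2 : ℤ) ∣ 2 * (t - t') + (3 * k + 2) * (e - e') := ⟨2 * (k + 1) * c, by rw [hy]; ring⟩
    have hk₂ : (k : ℤ) % 2 = 1 := Int.odd_iff.mp (hk.natCast (R := ℤ))
    rcases he with rfl | rfl <;> rcases he' with rfl | rfl <;> ring_nf at h2 ⊢ <;> omega
  have h : t - t' = 2 * (k + 1) * c := mul_left_cancel₀ two_ne_zero (by linear_combination hy)
  exact ⟨rfl, by linarith [Int.eq_zero_of_abs_lt_dvd ⟨c, h⟩ (abs_lt.2 ⟨by linarith, by linarith⟩)]⟩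

end cells

abbrev TileIndex (k : ℕ) := (Fin 2 × Fin (k - 1)) ⊕ Fin 2 ⊕ Fin 2

lemma Nat.card_tileIndex {k : ℕ} (hk : 0 < k) : Nat.card (TileIndex k) = 2 * (k + 1) := by
  rw [Nat.card_eq_fintype_card]
  simp only [Fintype.card_sum, Fintype.card_prod, Fintype.card_fin]
  omega

namespace TileIndex

variable {k : ℕ}

def dir : TileIndex k → Fin 3
  | .inl _ => 0
  | .inr (.inl _) => 1
  | .inr (.inr _) => 2

def cell : TileIndex k → ℤ → ℤ
  | .inl (e, j), t => cellX k e j t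
  | .inr (.inl e), t => cellY k e t
  | .inr (.inr e), t => cellZ k e t

lemma eq_of_dvd_cell_sub_cell (hk : Odd k) {c c' : TileIndex k} {t t' : ℤ}
    (ht : t ∈ puncturedInterval k) (ht' : t' ∈ puncturedInterval k)
    (h : (4 * k * (k + 1) : ℤ) ∣ c.cell t - c'.cell t') : c = c' ∧ t = t' := by
  have layer (e : Fin 2) : ((e : ℕ) : ℤ) = 0 ∨ ((e : ℕ) : ℤ) = 1 := by omega
  have row (j : Fin (k - 1)) : 0 ≤ ((j : ℕ) : ℤ) ∧ ((j : ℕ) : ℤ) + 2 ≤ k := by omega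
  rcases c with ⟨e, j⟩ | e | e <;> rcases c' with ⟨e', j'⟩ | e' | e' <;> simp only [cell] at h
  · obtain ⟨he, hj, rfl⟩ := eq_of_dvd_cellX_sub_cellX (layer e) (layer e') (row j).1 (row j).2
      (row j').1 (row j').2 ht ht' h
    obtain rfl : e = e' := Fin.ext (by omega)
    obtain rfl : j = j' := Fin.ext (by omega)
    exact ⟨rfl, rfl⟩
  · exact (not_dvd_cellX_sub_cellY (layer e) (layer e') (row j).1 (row j).2 ht ht' h).elim
  · exact (not_dvd_cellX_sub_cellZ (row j).1 (row j).2 h).elim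
  · exact (not_dvd_cellX_sub_cellY (layer e') (layer e) (row j').1 (row j').2 ht' ht
      (dvd_sub_comm.mp h)).elim
  · obtain ⟨he, rfl⟩ := eq_of_dvd_cellY_sub_cellY (layer e) (layer e') ht ht' h
    obtain rfl : e = e' := Fin.ext (by omega)
    exact ⟨rfl, rfl⟩
  · exact (not_dvd_cellY_sub_cellZ hk (layer e) (layer e') ht ht' h).elim
  · exact (not_dvd_cellX_sub_cellZ (row j').1 (row j').2 (dvd_sub_comm.mp h)).elim
  · exact (not_dvd_cellY_sub_cellZ hk (layer e') (layer e) ht' ht (dvd_sub_comm.mp h)).elim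
  · obtain ⟨he, rfl⟩ := eq_of_dvd_cellZ_sub_cellZ hk (layer e) (layer e') ht ht' h
    obtain rfl : e = e' := Fin.ext (by omega)
    exact ⟨rfl, rfl⟩

end TileIndex

theorem puncturedInterval_tiles_Z3_of_odd_general (k : ℕ) (hodd : Odd k) :
    Tiles k (Set.univ : Set (Fin 3 → ℤ)) := by
  have hk := hodd.pos
  have : NeZero (4 * k * (k + 1)) := ⟨by positivity⟩
  let g : Fin 3 → ZMod (4 * k * (k + 1)) := ![k, k + 1, 2 * k]
  have hcell (c : TileIndex k) (t : ℤ) :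
      ((c.cell 0 : ℤ) : ZMod (4 * k * (k + 1))) + t • g c.dir = c.cell t := by
    rcases c with ⟨e, j⟩ | e | e <;>
      simp only [TileIndex.cell, TileIndex.dir, g, cellX, cellY, cellZ, Matrix.cons_val,
        zsmul_eq_mul] <;> push_cast <;> ring
  refine tiles_univ_of_bijective g (fun c : TileIndex k => (c.cell 0 : ZMod (4 * k * (k + 1))))
    TileIndex.dir (Function.Injective.bijective_of_nat_card_le ?_ ?_)
  · rintro ⟨c, t, ht⟩ ⟨c', t', ht'⟩ h
    simp only [hcell, ZMod.intCast_eq_intCast_iff_dvd_sub] at h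
    obtain ⟨rfl, rfl⟩ := TileIndex.eq_of_dvd_cell_sub_cell hodd ht ht'
      (dvd_sub_comm.mp (by exact_mod_cast h))
    rfl
  · rw [Nat.card_zmod, Nat.card_prod, Nat.card_tileIndex hk, Nat.card_puncturedInterval]
    exact le_of_eq (by ring)

/-- For every odd positive integer `k`, the punctured interval `T_k` tiles `ℤ^3`. -/
theorem puncturedInterval_tiles_Z3_of_odd (k : ℕ) (hk : 0 < k) (hodd : Odd k) :
    Tiles k (Set.univ : Set (Fin 3 → ℤ)) :=
  puncturedInterval_tiles_Z3_of_odd_general k hodd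
end

section
/- Let k ≥ 3, let d ≥ 1 and let S ⊆ ℤ^d with |S| = 3. Then there exists a set Y ⊆ S × ℤ ⊆ ℤ^{d+1} such that Y is a disjoint union of copies of T_k each lying in the last coordinate direction (i.e. each copy has the form {(s, m+t) : t ∈ T_k} for some s ∈ S and m ∈ ℤ), and for every n ∈ ℤ the intersection Y ∩ (S × {n}) has exactly 2 elements. -/
/-!
Put the three points of `S` in three columns and stack copies of `T_k` in each column with
period `3k`, shifting the stack by `k` from one column to the next. Copies centred at the
multiples of `3k` leave uncovered exactly the heights congruent to `0` or to one of
`k + 1, …, 2k - 1` modulo `3k`; the shifts of this gap pattern by `0`, `k`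
and `2k` partition `ℤ`, so every height is covered in exactly two of the three columns.
-/

open Set Function

section VerticalCopies

variable {X : Type*}

def verticalCopy (k : ℕ) (s : X) (m : ℤ) : Set (X × ℤ) :=
  (fun t : ℤ => (s, m + t)) '' puncturedInterval k

theorem mem_verticalCopy {k : ℕ} {s : X} {m : ℤ} {p : X × ℤ} :
    p ∈ verticalCopy k s m ↔ p.1 = s ∧ p.2 - m ∈ puncturedInterval k := by
  obtain ⟨x, n⟩ := p
  constructor
  · rintro ⟨t, ht, h⟩
    simp only [Prod.mk.injEq] at h
    obtain ⟨rfl, rfl⟩ := h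
    simpa using ht
  · rintro ⟨rfl, h⟩
    exact ⟨n - m, h, by simp⟩

theorem disjoint_verticalCopy_of_ne {k : ℕ} {s s' : X} (m m' : ℤ) (h : s ≠ s') :
    Disjoint (verticalCopy k s m) (verticalCopy k s' m') :=
  disjoint_left.2 fun _ h₁ h₂ =>
    h <| (mem_verticalCopy.1 h₁).1.symm.trans (mem_verticalCopy.1 h₂).1

theorem disjoint_verticalCopy_of_two_mul_lt_abs {k : ℕ} (s : X) {m m' : ℤ}
    (h : 2 * k < |m - m'|) : Disjoint (verticalCopy k s m) (verticalCopy k s m') := by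
  refine disjoint_left.2 fun p h₁ h₂ => ?_
  obtain ⟨-, -, h₁l, h₁r⟩ := mem_verticalCopy.1 h₁
  obtain ⟨-, -, h₂l, h₂r⟩ := mem_verticalCopy.1 h₂
  rcases lt_abs.1 h with h | h <;> omega

theorem pairwiseDisjoint_range_verticalCopy {ι : Type*} {k : ℕ} (hk : 0 < k) {e : ι → X}
    (he : Injective e) (o : ι → ℤ) :
    (range fun p : ι × ℤ =>
      verticalCopy k (e p.1) (o p.1 + 3 * k * p.2)).PairwiseDisjoint id := by
  refine pairwiseDisjoint_range_iff.2 fun ⟨i, j⟩ ⟨i', j'⟩ hne => ?_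
  obtain rfl | hi := eq_or_ne i i'
  · have hj : j ≠ j' := by rintro rfl; exact hne rfl
    apply disjoint_verticalCopy_of_two_mul_lt_abs
    rw [show o i + 3 * k * j - (o i + 3 * k * j') = 3 * k * (j - j') by ring, abs_mul,
      abs_of_pos (by positivity : (0 : ℤ) < 3 * k)]
    have : 1 ≤ |j - j'| := Int.one_le_abs (sub_ne_zero.2 hj)
    nlinarith
  · exact disjoint_verticalCopy_of_ne _ _ (he.ne hi)

end VerticalCopies

def coveredHeights (k : ℕ) (o : ℤ) : Set ℤ :=
  {n | ∃ j : ℤ, n - (o + 3 * k * j) ∈ puncturedInterval k}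

theorem iUnion_verticalCopy {X : Type*} (k : ℕ) (s : X) (o : ℤ) :
    ⋃ j : ℤ, verticalCopy k s (o + 3 * k * j) = {s} ×ˢ coveredHeights k o := by
  ext ⟨x, n⟩
  simp only [mem_iUnion, mem_verticalCopy, mem_prod, mem_singleton_iff, coveredHeights,
    mem_ofPred_eq, exists_and_left]

theorem mem_coveredHeights_iff {k : ℕ} {o q r n : ℤ} (hn : n = o + 3 * k * q + r)
    (hr₀ : 0 ≤ r) (hr : r < 3 * k) :
    n ∈ coveredHeights k o ↔ r ≠ 0 ∧ (r ≤ k ∨ 2 * k ≤ r) := by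
  constructor
  · rintro ⟨j, ht₀, htl, htr⟩
    set t := n - (o + 3 * k * j)
    have : r = t % (3 * k) := by
      rw [show t = r + 3 * k * (q - j) by simp only [t]; rw [hn]; ring,
        Int.add_mul_emod_self_left, Int.emod_eq_of_lt hr₀ hr]
    rcases lt_or_gt_of_ne ht₀ with ht | ht
    · rw [← Int.add_mul_emod_self_left t (3 * k) 1,
        Int.emod_eq_of_lt (by omega) (by omega)] at this
      omega
    · rw [Int.emod_eq_of_lt (by omega) (by omega)] at this
      omega
  · rintro ⟨hr0, hrk | hrk⟩
    · exact ⟨q, by simp only [puncturedInterval, mem_ofPred_eq]; omega⟩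
    · exact ⟨q + 1, by simp only [puncturedInterval, mem_ofPred_eq]; rw [hn]; ring_nf; omega⟩

theorem mem_coveredHeights_shift_iff {k : ℕ} {q r a : ℤ} (hr₀ : 0 ≤ r) (hr : r < 3 * k)
    (ha₀ : 0 ≤ a) (ha : a ≤ 3 * k) :
    3 * k * q + r ∈ coveredHeights k a ↔
      let r' := if a ≤ r then r - a else r - a + 3 * k
      r' ≠ 0 ∧ (r' ≤ k ∨ 2 * k ≤ r') := by
  split_ifs with h
  · exact mem_coveredHeights_iff (q := q) (by ring) (by omega) (by omega)
  · exact mem_coveredHeights_iff (q := q - 1) (by ring) (by omega) (by omega)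

theorem exists_setOf_mem_coveredHeights_eq_compl_singleton {k : ℕ} (hk : 0 < k) (n : ℤ) :
    ∃ i₀ : Fin 3, {i : Fin 3 | n ∈ coveredHeights k (k * i)} = {i₀}ᶜ := by
  obtain ⟨q, r, rfl, hr₀, hr⟩ : ∃ q r, n = 3 * k * q + r ∧ 0 ≤ r ∧ r < 3 * k :=
    ⟨n / (3 * k), n % (3 * k), (Int.mul_ediv_add_emod n _).symm, Int.emod_nonneg _ (by omega),
      Int.emod_lt_of_pos _ (by omega)⟩
  set A : Fin 3 → Prop := fun i => 3 * k * q + r ∈ coveredHeights k (k * i)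
  have h₀ := mem_coveredHeights_shift_iff (q := q) (a := k * (0 : Fin 3)) hr₀ hr
    (by simp) (by simp)
  have h₁ := mem_coveredHeights_shift_iff (q := q) (a := k * (1 : Fin 3)) hr₀ hr
    (by simp) (by simp; omega)
  have h₂ := mem_coveredHeights_shift_iff (q := q) (a := k * (2 : Fin 3)) hr₀ hr
    (by simp) (by simp; omega)
  have : (¬A 0 ∧ A 1 ∧ A 2) ∨ (A 0 ∧ ¬A 1 ∧ A 2) ∨ (A 0 ∧ A 1 ∧ ¬A 2) := by
    simp only [A, h₀, h₁, h₂, Fin.val_zero, Fin.val_one, Fin.val_two]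
    push_cast
    split_ifs <;> omega
  rcases this with h | h | h
  exacts [⟨0, ext fun i => by fin_cases i <;> simp [A] at h ⊢ <;> tauto⟩,
    ⟨1, ext fun i => by fin_cases i <;> simp [A] at h ⊢ <;> tauto⟩,
    ⟨2, ext fun i => by fin_cases i <;> simp [A] at h ⊢ <;> tauto⟩]

theorem ncard_iUnion_singleton_prod_inter {ι X : Type*} {e : ι → X} (he : Injective e)
    (A : ι → Set ℤ) (n : ℤ) :
    ((⋃ i, {e i} ×ˢ A i) ∩ range e ×ˢ {n}).ncard = {i | n ∈ A i}.ncard := by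
  have : (⋃ i, {e i} ×ˢ A i) ∩ range e ×ˢ {n} = (fun i => (e i, n)) '' {i | n ∈ A i} := by
    ext ⟨x, m⟩
    simp only [mem_inter_iff, mem_iUnion, mem_prod, mem_singleton_iff, mem_range, mem_image,
      mem_ofPred_eq, Prod.mk.injEq]
    constructor
    · rintro ⟨⟨i, rfl, hm⟩, -, rfl⟩
      exact ⟨i, hm, rfl, rfl⟩
    · rintro ⟨i, hm, rfl, rfl⟩
      exact ⟨⟨i, rfl, hm⟩, ⟨i, rfl⟩, rfl⟩
  rw [this, ncard_image_of_injective _ fun i j h => he (Prod.ext_iff.1 h).1]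

theorem exists_injective_fin_range_eq_of_ncard_eq {X : Type*} {S : Set X} {n : ℕ}
    (hS : S.ncard = n) (hn : n ≠ 0) : ∃ e : Fin n → X, Injective e ∧ range e = S := by
  obtain ⟨m, e, he, rfl⟩ := (finite_of_ncard_ne_zero (hS ▸ hn)).fin_param
  obtain rfl : m = n := by
    rw [← hS, ← image_univ, ncard_image_of_injective _ he, ncard_univ, Nat.card_fin]
  exact ⟨e, he, rfl⟩

theorem exists_Y_two_per_level_general (k : ℕ) (hk : 3 ≤ k) (d : ℕ)
    (S : Set (Fin d → ℤ)) (hS : S.ncard = 3) :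
    ∃ Y : Set ((Fin d → ℤ) × ℤ),
      Y ⊆ S ×ˢ (Set.univ : Set ℤ) ∧
      (∃ 𝒞 : Set (Set ((Fin d → ℤ) × ℤ)),
        (∀ C ∈ 𝒞, ∃ s ∈ S, ∃ m : ℤ,
          C = (fun t : ℤ => (s, m + t)) '' puncturedInterval k) ∧
        𝒞.PairwiseDisjoint id ∧ ⋃₀ 𝒞 = Y) ∧
      ∀ n : ℤ, (Y ∩ S ×ˢ ({n} : Set ℤ)).ncard = 2 := by
  obtain ⟨e, he, rfl⟩ := exists_injective_fin_range_eq_of_ncard_eq hS three_ne_zero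
  have hk₀ : 0 < k := by omega
  refine ⟨⋃ i, {e i} ×ˢ coveredHeights k (k * i), ?_,
    ⟨_, ?_, pairwiseDisjoint_range_verticalCopy hk₀ he fun i => k * i, ?_⟩, fun n => ?_⟩
  · exact iUnion_subset fun i => prod_mono (singleton_subset_iff.2 (mem_range_self i)) (subset_univ _)
  · rintro _ ⟨⟨i, j⟩, rfl⟩
    exact ⟨e i, mem_range_self i, _, rfl⟩
  · simp only [sUnion_range, iUnion_prod', iUnion_verticalCopy]
  · obtain ⟨i₀, hi₀⟩ := exists_setOf_mem_coveredHeights_eq_compl_singleton hk₀ n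
    rw [ncard_iUnion_singleton_prod_inter he, hi₀, ncard_compl]
    simp

/-- Lemma 3 of the paper: given `S ⊆ ℤ^d` with `|S| = 3`, there is a set
`Y ⊆ S × ℤ` which is a disjoint union of copies of `T_k` in the last coordinate
direction and meets each slice `S × {n}` in exactly 2 points. -/
theorem exists_Y_two_per_level (k : ℕ) (hk : 3 ≤ k) (d : ℕ) (hd : 1 ≤ d)
    (S : Set (Fin d → ℤ)) (hS : S.ncard = 3) :
    ∃ Y : Set ((Fin d → ℤ) × ℤ),
      Y ⊆ S ×ˢ (Set.univ : Set ℤ) ∧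
      (∃ 𝒞 : Set (Set ((Fin d → ℤ) × ℤ)),
        (∀ C ∈ 𝒞, ∃ s ∈ S, ∃ m : ℤ,
          C = (fun t : ℤ => (s, m + t)) '' puncturedInterval k) ∧
        𝒞.PairwiseDisjoint id ∧ ⋃₀ 𝒞 = Y) ∧
      ∀ n : ℤ, (Y ∩ S ×ˢ ({n} : Set ℤ)).ncard = 2 :=
  exists_Y_two_per_level_general k hk d S hS
end

section
/- For every positive integer k and every point x ∈ (ℤ/(k+1)ℤ)², the set (ℤ/(k+1)ℤ)² \ {x} can be partitioned into pairwise disjoint strings of the torus (ℤ/(k+1)ℤ)². -/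
/-! Take the column through `x` with `x` removed, and every row with its point on that column
removed. A point other than `x` lies in the first string if it is on the column of `x`, and
otherwise in the string of its own row; this works in any product `α × β`. -/

/-- A string in the torus `(ℤ/(k+1)ℤ)²`: a row or column with one of its points removed. -/
def IsTorusString (k : ℕ) (L : Set (ZMod (k + 1) × ZMod (k + 1))) : Prop :=
  (∃ (c : ZMod (k + 1)) (p : ZMod (k + 1) × ZMod (k + 1)),
    p.2 = c ∧ L = {q : ZMod (k + 1) × ZMod (k + 1) | q.2 = c} \ {p}) ∨
  (∃ (c : ZMod (k + 1)) (p : ZMod (k + 1) × ZMod (k + 1)),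
    p.1 = c ∧ L = {q : ZMod (k + 1) × ZMod (k + 1) | q.1 = c} \ {p})

section CrossTiling

variable {α β : Type*}

def columnStringThrough (x : α × β) : Set (α × β) := {q | q.1 = x.1} \ {x}

def rowStringOff (x : α × β) (c : β) : Set (α × β) := {q | q.2 = c} \ {(x.1, c)}

def crossTiling (x : α × β) : Set (Set (α × β)) :=
  insert (columnStringThrough x) (Set.range (rowStringOff x))

lemma mem_rowStringOff {x q : α × β} {c : β} : q ∈ rowStringOff x c ↔ q.2 = c ∧ q.1 ≠ x.1 := by
  obtain ⟨a, b⟩ := q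
  simp only [rowStringOff, Set.mem_sdiff, Set.mem_ofPred_eq, Set.mem_singleton_iff, Prod.mk.injEq]
  grind

lemma disjoint_columnStringThrough_rowStringOff (x : α × β) (c : β) :
    Disjoint (columnStringThrough x) (rowStringOff x c) :=
  Set.disjoint_left.2 fun _ hcol hrow => (mem_rowStringOff.1 hrow).2 hcol.1

lemma pairwise_disjoint_rowStringOff (x : α × β) :
    Pairwise (Function.onFun Disjoint (rowStringOff x)) :=
  fun _ _ hcd => Set.disjoint_left.2 fun _ hc hd =>
    hcd ((mem_rowStringOff.1 hc).1.symm.trans (mem_rowStringOff.1 hd).1)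

lemma pairwiseDisjoint_crossTiling (x : α × β) : (crossTiling x).PairwiseDisjoint id := by
  refine Set.PairwiseDisjoint.insert (pairwise_disjoint_rowStringOff x).range_pairwise ?_
  rintro _ ⟨c, rfl⟩ -
  exact disjoint_columnStringThrough_rowStringOff x c

lemma sUnion_crossTiling (x : α × β) : ⋃₀ crossTiling x = {x}ᶜ := by
  ext q
  simp only [crossTiling, Set.sUnion_insert, Set.sUnion_range, Set.mem_union, Set.mem_iUnion,
    mem_rowStringOff, columnStringThrough, Set.mem_sdiff, Set.mem_ofPred_eq]
  constructor
  · rintro (⟨-, hqx⟩ | ⟨c, -, hq⟩)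
    · exact hqx
    · rintro rfl
      exact hq rfl
  · intro hqx
    by_cases hq : q.1 = x.1
    · exact Or.inl ⟨hq, hqx⟩
    · exact Or.inr ⟨q.2, rfl, hq⟩

end CrossTiling

theorem torus_minus_point_tiled_by_strings_general (k : ℕ)
    (x : ZMod (k + 1) × ZMod (k + 1)) :
    ∃ 𝒞 : Set (Set (ZMod (k + 1) × ZMod (k + 1))),
      (∀ L ∈ 𝒞, IsTorusString k L) ∧ 𝒞.PairwiseDisjoint id ∧
      ⋃₀ 𝒞 = ({x}ᶜ : Set (ZMod (k + 1) × ZMod (k + 1))) := by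
  refine ⟨crossTiling x, ?_, pairwiseDisjoint_crossTiling x, sUnion_crossTiling x⟩
  rintro L (rfl | ⟨c, rfl⟩)
  · exact Or.inr ⟨x.1, x, rfl, rfl⟩
  · exact Or.inl ⟨c, (x.1, c), rfl, rfl⟩

/-- The torus `(ℤ/(k+1)ℤ)²` minus a single point can be partitioned into strings. -/
theorem torus_minus_point_tiled_by_strings (k : ℕ) (hk : 0 < k)
    (x : ZMod (k + 1) × ZMod (k + 1)) :
    ∃ 𝒞 : Set (Set (ZMod (k + 1) × ZMod (k + 1))),
      (∀ L ∈ 𝒞, IsTorusString k L) ∧ 𝒞.PairwiseDisjoint id ∧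
      ⋃₀ 𝒞 = ({x}ᶜ : Set (ZMod (k + 1) × ZMod (k + 1))) :=
  torus_minus_point_tiled_by_strings_general k x
end

section
/- For every positive integer k and every integer r, the set {m ∈ ℤ : m ≢ r (mod k+1)} (a line with every (k+1)-th point removed, i.e. a string) is a disjoint union of translates of T_k; explicitly, it is the disjoint union over n ∈ ℤ of the sets {r + 2n(k+1) + t : t ∈ T_k}. -/
/-!
Reduce `m - r` modulo `2(k+1)` into the window `[-k, k+2)`. The translates `r + 2n(k+1) + [-k, k+2)`
tile `ℤ` with `n` determined by the point, which gives disjointness. Inside the window, `T_k` is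
exactly the set of residues not divisible by `k+1` (the two excluded points are `0` and `k+1`), and
divisibility by `k+1` is unaffected by the reduction since `k+1 ∣ 2(k+1)`.
-/

section Tiling

variable {a c d : ℤ} (hd : 0 < d) {S : Set ℤ}
include hd

theorem mem_image_add_mul_add_iff (hS : S ⊆ Set.Ico a (a + d)) (n x : ℤ) :
    x ∈ (fun t => c + n * d + t) '' S ↔
      toIcoDiv hd a (x - c) = n ∧ toIcoMod hd a (x - c) ∈ S := by
  constructor
  · rintro ⟨t, ht, rfl⟩
    have hdiv : toIcoDiv hd a (c + n * d + t - c) = n :=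
      toIcoDiv_eq_of_sub_zsmul_mem_Ico hd (by convert hS ht using 1; simp only [smul_eq_mul]; ring)
    refine ⟨hdiv, ?_⟩
    rw [← self_sub_toIcoDiv_zsmul, hdiv, smul_eq_mul]
    convert ht using 1
    ring
  · rintro ⟨rfl, hmod⟩
    refine ⟨_, hmod, ?_⟩
    rw [← self_sub_toIcoDiv_zsmul, smul_eq_mul]
    ring

theorem pairwiseDisjoint_image_add_mul_add (hS : S ⊆ Set.Ico a (a + d)) :
    (Set.univ : Set ℤ).PairwiseDisjoint (fun n => (fun t => c + n * d + t) '' S) := by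
  intro i _ j _ hij
  refine Set.disjoint_left.2 fun x hi hj => hij ?_
  rw [← ((mem_image_add_mul_add_iff hd hS i x).1 hi).1, ((mem_image_add_mul_add_iff hd hS j x).1 hj).1]

theorem iUnion_image_add_mul_add (hS : S ⊆ Set.Ico a (a + d)) :
    ⋃ n, (fun t => c + n * d + t) '' S = {x | toIcoMod hd a (x - c) ∈ S} := by
  ext x
  simp only [Set.mem_iUnion, mem_image_add_mul_add_iff hd hS, exists_eq_left', Set.mem_ofPred_eq]

theorem dvd_toIcoMod_iff {m : ℤ} (hm : m ∣ d) (b : ℤ) : m ∣ toIcoMod hd a b ↔ m ∣ b := by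
  rw [← self_sub_toIcoDiv_zsmul, smul_eq_mul]
  exact dvd_sub_left (hm.mul_left _)

end Tiling

theorem puncturedInterval_subset_Ico (k : ℕ) :
    puncturedInterval k ⊆ Set.Ico (-(k : ℤ)) (-k + 2 * (k + 1)) := by
  rintro t ⟨-, hlo, hhi⟩
  exact ⟨hlo, by omega⟩

theorem mem_puncturedInterval_iff_not_dvd {k : ℕ} {t : ℤ}
    (ht : t ∈ Set.Ico (-(k : ℤ)) (-k + 2 * (k + 1))) :
    t ∈ puncturedInterval k ↔ ¬ (k + 1 : ℤ) ∣ t := by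
  constructor
  · rintro ⟨hne, hlo, hhi⟩ hdvd
    exact hne (Int.eq_zero_of_abs_lt_dvd hdvd (abs_lt.2 ⟨by omega, by omega⟩))
  · intro hndvd
    obtain ⟨hlo, hhi⟩ := ht
    have hne_zero : t ≠ 0 := by rintro rfl; exact hndvd (dvd_zero _)
    have hne_succ : t ≠ k + 1 := by rintro rfl; exact hndvd dvd_rfl
    exact ⟨hne_zero, hlo, by omega⟩

theorem string_is_disjoint_union_of_translates_general (k : ℕ) (r : ℤ) :
    (Set.univ : Set ℤ).PairwiseDisjoint
      (fun n : ℤ => (fun t : ℤ => r + 2 * n * ((k : ℤ) + 1) + t) '' puncturedInterval k) ∧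
    ⋃ n : ℤ, (fun t : ℤ => r + 2 * n * ((k : ℤ) + 1) + t) '' puncturedInterval k =
      {m : ℤ | ¬ m ≡ r [ZMOD ((k : ℤ) + 1)]} := by
  have hd : (0 : ℤ) < 2 * (k + 1) := by positivity
  have hS := puncturedInterval_subset_Ico k
  have hperiod : ∀ n : ℤ, 2 * n * ((k : ℤ) + 1) = n * (2 * (k + 1)) := fun n => by ring
  simp only [hperiod]
  refine ⟨pairwiseDisjoint_image_add_mul_add hd hS, ?_⟩
  rw [iUnion_image_add_mul_add hd hS]
  ext m
  rw [Set.mem_ofPred_eq, Set.mem_ofPred_eq,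
    mem_puncturedInterval_iff_not_dvd (toIcoMod_mem_Ico hd _ _), dvd_toIcoMod_iff hd (dvd_mul_left _ _), Int.modEq_comm, Int.modEq_iff_dvd]

/-- A string in `ℤ` (a line with every `(k+1)`-th point removed) is the disjoint
union of the translates of `T_k` by `r + 2n(k+1)`, `n ∈ ℤ`. -/
theorem string_is_disjoint_union_of_translates (k : ℕ) (hk : 0 < k) (r : ℤ) :
    (Set.univ : Set ℤ).PairwiseDisjoint
      (fun n : ℤ => (fun t : ℤ => r + 2 * n * ((k : ℤ) + 1) + t) '' puncturedInterval k) ∧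
    ⋃ n : ℤ, (fun t : ℤ => r + 2 * n * ((k : ℤ) + 1) + t) '' puncturedInterval k =
      {m : ℤ | ¬ m ≡ r [ZMOD ((k : ℤ) + 1)]} :=
  string_is_disjoint_union_of_translates_general k r
end

section
/- Let k be a positive integer and let X ⊆ (ℤ/(k+1)ℤ)² be a set that contains either exactly one point in every row or exactly one point in every column. Then the complement (ℤ/(k+1)ℤ)² \ X can be partitioned into pairwise disjoint strings of the torus (ℤ/(k+1)ℤ)². -/
/-! A set meeting every row (or every column) exactly once is the image of a section `g` of the
projection `π` onto the row (column) index. Removing `g j` from the fibre `π ⁻¹' {j}` leaves a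
string, and these punctured fibres partition the complement of the set. -/

section PuncturedFibres

variable {γ β : Type*} (π : γ → β)

theorem pairwiseDisjoint_range_preimage_singleton_diff (s : β → Set γ) :
    (Set.range fun j => π ⁻¹' {j} \ s j).PairwiseDisjoint id := by
  refine Set.pairwiseDisjoint_range_iff.2 fun j j' hne => Set.disjoint_left.2 ?_
  rintro x ⟨rfl, -⟩ ⟨rfl, -⟩
  exact hne rfl

theorem sUnion_range_preimage_singleton_diff_eq_compl {X : Set γ} (g : β → γ)
    (hX : ∀ x, x ∈ X ↔ g (π x) = x) :
    ⋃₀ Set.range (fun j => π ⁻¹' {j} \ {g j}) = Xᶜ := by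
  ext x
  simp only [Set.sUnion_range, Set.mem_iUnion, Set.mem_sdiff, Set.mem_preimage,
    Set.mem_singleton_iff, Set.mem_compl_iff, hX]
  constructor
  · rintro ⟨j, rfl, hx⟩ h
    exact hx h.symm
  · exact fun hx => ⟨π x, rfl, fun h => hx h.symm⟩

theorem exists_partition_compl_into_punctured_fibres {X : Set γ} (g : β → γ)
    (hX : ∀ x, x ∈ X ↔ g (π x) = x) :
    ∃ 𝒞 : Set (Set γ), (∀ L ∈ 𝒞, ∃ j, L = π ⁻¹' {j} \ {g j}) ∧
      𝒞.PairwiseDisjoint id ∧ ⋃₀ 𝒞 = Xᶜ :=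
  ⟨_, by rintro _ ⟨j, rfl⟩; exact ⟨j, rfl⟩, pairwiseDisjoint_range_preimage_singleton_diff π _,
    sUnion_range_preimage_singleton_diff_eq_compl π g hX⟩

end PuncturedFibres

section Transversals

variable {α β : Type*} {X : Set (α × β)}

theorem exists_mem_iff_of_existsUnique_fst (h : ∀ j, ∃! i, (i, j) ∈ X) :
    ∃ f : β → α, ∀ q, q ∈ X ↔ (f q.2, q.2) = q := by
  choose f hf hf' using h
  refine ⟨f, fun q => ⟨fun hq => Prod.ext (hf' q.2 q.1 hq).symm rfl, fun hq => ?_⟩⟩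
  exact hq ▸ hf q.2

theorem exists_mem_iff_of_existsUnique_snd (h : ∀ i, ∃! j, (i, j) ∈ X) :
    ∃ f : α → β, ∀ q, q ∈ X ↔ (q.1, f q.1) = q := by
  choose f hf hf' using h
  refine ⟨f, fun q => ⟨fun hq => Prod.ext rfl (hf' q.1 q.2 hq).symm, fun hq => ?_⟩⟩
  exact hq ▸ hf q.1

end Transversals

theorem complement_of_transversal_tiled_by_strings_general (k : ℕ)
    (X : Set (ZMod (k + 1) × ZMod (k + 1)))
    (hX : (∀ j : ZMod (k + 1), ∃! i : ZMod (k + 1), (i, j) ∈ X) ∨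
          (∀ i : ZMod (k + 1), ∃! j : ZMod (k + 1), (i, j) ∈ X)) :
    ∃ 𝒞 : Set (Set (ZMod (k + 1) × ZMod (k + 1))),
      (∀ L ∈ 𝒞, IsTorusString k L) ∧ 𝒞.PairwiseDisjoint id ∧ ⋃₀ 𝒞 = Xᶜ := by
  rcases hX with hRows | hCols
  · obtain ⟨f, hf⟩ := exists_mem_iff_of_existsUnique_fst hRows
    obtain ⟨𝒞, hstring, hdisj, hunion⟩ :=
      exists_partition_compl_into_punctured_fibres Prod.snd (fun j => (f j, j)) hf
    refine ⟨𝒞, fun L hL => ?_, hdisj, hunion⟩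
    obtain ⟨j, rfl⟩ := hstring L hL
    exact Or.inl ⟨j, (f j, j), rfl, rfl⟩
  · obtain ⟨f, hf⟩ := exists_mem_iff_of_existsUnique_snd hCols
    obtain ⟨𝒞, hstring, hdisj, hunion⟩ :=
      exists_partition_compl_into_punctured_fibres Prod.fst (fun i => (i, f i)) hf
    refine ⟨𝒞, fun L hL => ?_, hdisj, hunion⟩
    obtain ⟨i, rfl⟩ := hstring L hL
    exact Or.inr ⟨i, (i, f i), rfl, rfl⟩

/-- If `X ⊆ (ℤ/(k+1)ℤ)²` contains exactly one point in every row, or exactly one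
point in every column, then its complement can be partitioned into strings. -/
theorem complement_of_transversal_tiled_by_strings (k : ℕ) (hk : 0 < k)
    (X : Set (ZMod (k + 1) × ZMod (k + 1)))
    (hX : (∀ j : ZMod (k + 1), ∃! i : ZMod (k + 1), (i, j) ∈ X) ∨
          (∀ i : ZMod (k + 1), ∃! j : ZMod (k + 1), (i, j) ∈ X)) :
    ∃ 𝒞 : Set (Set (ZMod (k + 1) × ZMod (k + 1))),
      (∀ L ∈ 𝒞, IsTorusString k L) ∧ 𝒞.PairwiseDisjoint id ∧ ⋃₀ 𝒞 = Xᶜ :=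
  complement_of_transversal_tiled_by_strings_general k X hX
end

section
/- For every positive integer k, the set X₃ = {(x, y) ∈ ℤ² : y − x ≢ 0 (mod k+1)} (which equals ℤ² \ (S₁ ∪ S₂), i.e. ℤ² with every (k+1)-th diagonal removed) is a disjoint union of horizontal copies of T_k. -/
namespace puncturedInterval

variable {k : ℕ} {t t' : ℤ}

lemma not_dvd (ht : t ∈ puncturedInterval k) : ¬ (k + 1 : ℤ) ∣ t := fun h =>
  ht.1 (Int.eq_zero_of_abs_lt_dvd h (abs_lt.mpr ⟨by linarith [ht.2.1], by linarith [ht.2.2]⟩))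

lemma eq_of_dvd_sub (ht : t ∈ puncturedInterval k) (ht' : t' ∈ puncturedInterval k)
    (h : 2 * (k + 1 : ℤ) ∣ t - t') : t = t' := by
  have := Int.eq_zero_of_abs_lt_dvd h
    (abs_lt.mpr ⟨by linarith [ht.2.1, ht'.2.2], by linarith [ht.2.2, ht'.2.1]⟩)
  linarith

lemma not_dvd_of_dvd_add {d : ℤ} (ht : t ∈ puncturedInterval k) (h : 2 * (k + 1 : ℤ) ∣ d + t) :
    ¬ (k + 1 : ℤ) ∣ d := fun hd =>
  not_dvd ht <| by simpa using (Dvd.dvd.mul_left (dvd_refl _) 2 |>.trans h).sub hd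

lemma exists_dvd_add {d : ℤ} (hd : ¬ (k + 1 : ℤ) ∣ d) :
    ∃ t ∈ puncturedInterval k, 2 * (k + 1 : ℤ) ∣ d + t := by
  set q := d / (2 * (k + 1))
  set r := d % (2 * (k + 1))
  have hdqr : 2 * (k + 1 : ℤ) * q + r = d := Int.mul_ediv_add_emod d _
  have hr0 : 0 ≤ r := Int.emod_nonneg _ (by positivity)
  have hr1 : r < 2 * (k + 1) := Int.emod_lt_of_pos _ (by positivity)
  have hr_ne_zero : r ≠ 0 := fun h => hd ⟨2 * q, by rw [← hdqr, h]; ring⟩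
  have hr_ne_mid : r ≠ k + 1 := fun h => hd ⟨2 * q + 1, by rw [← hdqr, h]; ring⟩
  by_cases hrk : r ≤ k
  · exact ⟨-r, ⟨by omega, by omega, by omega⟩, ⟨q, by rw [← hdqr]; ring⟩⟩
  · exact ⟨2 * (k + 1) - r, ⟨by omega, by omega, by omega⟩, ⟨q + 1, by rw [← hdqr]; ring⟩⟩

end puncturedInterval

def horizontalCopy (k : ℕ) (p : ℤ × ℤ) : Set (ℤ × ℤ) :=
  (fun t : ℤ => (p.1 + t, p.2)) '' puncturedInterval k

lemma mem_horizontalCopy {k : ℕ} {p q : ℤ × ℤ} :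
    q ∈ horizontalCopy k p ↔ q.1 - p.1 ∈ puncturedInterval k ∧ q.2 = p.2 := by
  constructor
  · rintro ⟨t, ht, rfl⟩
    simpa using ht
  · rintro ⟨ht, h2⟩
    exact ⟨q.1 - p.1, ht, Prod.ext (by simp) h2.symm⟩

def diagonalCenters (k : ℕ) : Set (ℤ × ℤ) := {c | 2 * (k + 1 : ℤ) ∣ c.2 - c.1}

lemma pairwiseDisjoint_diagonalCenters_horizontalCopy (k : ℕ) :
    (diagonalCenters k).PairwiseDisjoint (horizontalCopy k) := by
  intro c hc c' hc' hne
  refine Set.disjoint_left.mpr fun q hq hq' => hne ?_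
  rw [mem_horizontalCopy] at hq hq'
  have hdiff : 2 * (k + 1 : ℤ) ∣ (q.1 - c.1) - (q.1 - c'.1) := by
    have := dvd_sub hc hc'
    rwa [show c.2 - c.1 - (c'.2 - c'.1) = q.1 - c.1 - (q.1 - c'.1) by rw [← hq.2, ← hq'.2]; ring]
        at this
  have := puncturedInterval.eq_of_dvd_sub hq.1 hq'.1 hdiff
  exact Prod.ext (by linarith) (hq.2.symm.trans hq'.2)

lemma biUnion_diagonalCenters_horizontalCopy (k : ℕ) :
    ⋃ c ∈ diagonalCenters k, horizontalCopy k c = {p : ℤ × ℤ | ¬ ((k : ℤ) + 1 ∣ p.2 - p.1)} := by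
  ext q
  simp only [Set.mem_iUnion, mem_horizontalCopy, Set.mem_ofPred_eq, exists_prop]
  constructor
  · rintro ⟨c, hc, ht, h2⟩
    refine puncturedInterval.not_dvd_of_dvd_add ht ?_
    rwa [show q.2 - q.1 + (q.1 - c.1) = c.2 - c.1 by rw [h2]; ring]
  · intro hq
    obtain ⟨t, ht, hdvd⟩ := puncturedInterval.exists_dvd_add hq
    refine ⟨(q.1 - t, q.2), ?_, by simpa using ht, rfl⟩
    show 2 * (k + 1 : ℤ) ∣ q.2 - (q.1 - t)
    rwa [show q.2 - (q.1 - t) = q.2 - q.1 + t by ring]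

theorem X3_tiled_by_horizontal_copies_general (k : ℕ) :
    ∃ 𝒞 : Set (Set (ℤ × ℤ)),
      (∀ C ∈ 𝒞, ∃ p : ℤ × ℤ, C = (fun t : ℤ => (p.1 + t, p.2)) '' puncturedInterval k) ∧
      𝒞.PairwiseDisjoint id ∧
      ⋃₀ 𝒞 = {p : ℤ × ℤ | ¬ ((k : ℤ) + 1 ∣ p.2 - p.1)} := by
  refine ⟨horizontalCopy k '' diagonalCenters k, ?_, ?_, ?_⟩
  · rintro _ ⟨p, -, rfl⟩
    exact ⟨p, rfl⟩
  · rintro _ ⟨c, hc, rfl⟩ _ ⟨c', hc', rfl⟩ hne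
    exact pairwiseDisjoint_diagonalCenters_horizontalCopy k hc hc' fun h => hne (h ▸ rfl)
  · rw [Set.sUnion_image]
    exact biUnion_diagonalCenters_horizontalCopy k

/-- The set `X₃ = {(x, y) ∈ ℤ² : y - x ≢ 0 (mod k+1)}`, i.e. `ℤ²` with every
`(k+1)`-th diagonal removed, is a disjoint union of horizontal copies of `T_k`. -/
theorem X3_tiled_by_horizontal_copies (k : ℕ) (hk : 0 < k) :
    ∃ 𝒞 : Set (Set (ℤ × ℤ)),
      (∀ C ∈ 𝒞, ∃ p : ℤ × ℤ, C = (fun t : ℤ => (p.1 + t, p.2)) '' puncturedInterval k) ∧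
      𝒞.PairwiseDisjoint id ∧
      ⋃₀ 𝒞 = {p : ℤ × ℤ | ¬ ((k : ℤ) + 1 ∣ p.2 - p.1)} :=
  X3_tiled_by_horizontal_copies_general k
end

section
/- Let k be a positive integer with k ≡ 4 (mod 8). Then the set X₂ = ℤ² \ (S₁ ∪ S₃) is a disjoint union of horizontal copies of T_k. -/
/-- `S₁ = {(x, x + n(k+1)) : x - 2n ≡ 0, 1, 2 or 3 (mod 8)}`. -/
def S1 (k : ℕ) : Set (ℤ × ℤ) :=
  {p | ∃ x n : ℤ, p = (x, x + n * ((k : ℤ) + 1)) ∧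
    (x - 2 * n) % 8 ∈ ({0, 1, 2, 3} : Set ℤ)}

/-- `S₃ = {(x, x + n(k+1) + 1) : x - 2n ≡ 2, 3, 4 or 5 (mod 8)}`. -/
def S3 (k : ℕ) : Set (ℤ × ℤ) :=
  {p | ∃ x n : ℤ, p = (x, x + n * ((k : ℤ) + 1) + 1) ∧
    (x - 2 * n) % 8 ∈ ({2, 3, 4, 5} : Set ℤ)}

/-!
The shear `(x, y) ↦ (k + 2) y - x` maps every row of `ℤ²` bijectively onto `ℤ`, and horizontal
copies of `T_k` onto translates of `T_k`. Because `K = k + 1 ≡ 5 (mod 8)`, it maps `S₁ ∪ S₃`, in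
every row, onto one and the same `8K`-periodic set `R ⊆ ℤ`, the points congruent to
`0, K, 2K, 3K, 3K+1, 4K+1, 5K+1, 6K+1`. So it suffices to tile `ℤ \ R` by translates of `T_k`:
the tiles centred at the points congruent to `0, 2K, 4K+1, 6K+1` fill the gaps between consecutive
points of `R`, and distinct centres are at distance at least `2k + 1`, so these tiles are disjoint.
-/

open Set

theorem Int.ModEq.eq_of_sub_lt_of_sub_lt {n a b : ℤ} (h : a ≡ b [ZMOD n]) (hab : a - b < n)
    (hba : b - a < n) : a = b := by
  have := Int.eq_zero_of_abs_lt_dvd h.dvd (abs_sub_lt_iff.2 ⟨hba, hab⟩)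
  omega

theorem exists_horizontal_tiling_of_shear {T C X : Set ℤ} (a : ℤ)
    (hmaps : ∀ {c t}, c ∈ C → t ∈ T → c - t ∈ X)
    (hcover : ∀ {v}, v ∈ X → ∃ c ∈ C, c - v ∈ T)
    (hunique : ∀ {v c c'}, c ∈ C → c' ∈ C → c - v ∈ T → c' - v ∈ T → c = c') :
    ∃ 𝒞 : Set (Set (ℤ × ℤ)),
      (∀ D ∈ 𝒞, ∃ p : ℤ × ℤ, D = (fun t : ℤ => (p.1 + t, p.2)) '' T) ∧
      𝒞.PairwiseDisjoint id ∧ ⋃₀ 𝒞 = {p | a * p.2 - p.1 ∈ X} := by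
  refine ⟨(fun p : ℤ × ℤ => (fun t : ℤ => (p.1 + t, p.2)) '' T) '' {p | a * p.2 - p.1 ∈ C},
    ?_, ?_, ?_⟩
  · rintro _ ⟨p, -, rfl⟩
    exact ⟨p, rfl⟩
  · rintro _ ⟨p, hp, rfl⟩ _ ⟨q, hq, rfl⟩ hne
    refine disjoint_left.2 ?_
    rintro _ ⟨t, ht, rfl⟩ ⟨s, hs, hst⟩
    obtain ⟨h1, h2⟩ := Prod.mk.inj hst
    have hpq : a * p.2 - p.1 = a * q.2 - q.1 := hunique (v := a * p.2 - (p.1 + t)) hp hq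
      (by simpa using ht) (by rw [← h1, ← h2]; simpa using hs)
    rw [h2] at hpq
    exact hne (by rw [Prod.ext (show p.1 = q.1 by linarith) h2.symm])
  · ext ⟨x, y⟩
    simp only [sUnion_image, mem_iUnion, mem_image, Prod.mk.injEq, mem_ofPred_eq, exists_prop]
    constructor
    · rintro ⟨p, hp, t, ht, rfl, rfl⟩
      simpa [sub_add_eq_sub_sub] using hmaps hp ht
    · intro hv
      obtain ⟨c, hc, hcv⟩ := hcover hv
      refine ⟨(a * y - c, y), by simpa using hc, c - (a * y - x), hcv, by ring, rfl⟩

def residueClasses (n : ℤ) (A : Set ℤ) : Set ℤ := {v | ∃ a ∈ A, v ≡ a [ZMOD n]}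

theorem subset_residueClasses (n : ℤ) (A : Set ℤ) : A ⊆ residueClasses n A :=
  fun a ha => ⟨a, ha, Int.ModEq.refl a⟩

theorem mem_residueClasses_of_modEq {n v w : ℤ} {A : Set ℤ} (h : v ≡ w [ZMOD n])
    (hw : w ∈ residueClasses n A) : v ∈ residueClasses n A :=
  let ⟨a, ha, hwa⟩ := hw; ⟨a, ha, h.trans hwa⟩

section OneDim

variable (k : ℕ)

def removedResidues : Set ℤ :=
  {0, (k + 1 : ℤ), 2 * (k + 1 : ℤ), 3 * (k + 1 : ℤ), 3 * (k + 1 : ℤ) + 1, 4 * (k + 1 : ℤ) + 1,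
    5 * (k + 1 : ℤ) + 1, 6 * (k + 1 : ℤ) + 1}

def centerResidues : Set ℤ := {0, 2 * (k + 1 : ℤ), 4 * (k + 1 : ℤ) + 1, 6 * (k + 1 : ℤ) + 1}

abbrev removedSet : Set ℤ := residueClasses (8 * (k + 1 : ℤ)) (removedResidues k)

abbrev centerSet : Set ℤ := residueClasses (8 * (k + 1 : ℤ)) (centerResidues k)

variable {k}

theorem sub_notMem_removedSet {c t : ℤ} (hc : c ∈ centerSet k) (ht : t ∈ puncturedInterval k) :
    c - t ∉ removedSet k := by
  rintro ⟨r, hr, hcr⟩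
  obtain ⟨a, ha, hca⟩ := hc
  obtain ⟨_, _, _⟩ := ht
  simp only [centerResidues, removedResidues, mem_insert_iff, mem_singleton_iff] at ha hr
  have : a - t = r := ((hca.sub_right t).symm.trans hcr).eq_of_sub_lt_of_sub_lt (by omega)
    (by omega)
  omega

theorem centerSet_eq_of_sub_mem {v c c' : ℤ} (hc : c ∈ centerSet k) (hc' : c' ∈ centerSet k)
    (ht : c - v ∈ puncturedInterval k) (ht' : c' - v ∈ puncturedInterval k) : c = c' := by
  obtain ⟨a, ha, hca⟩ := hc
  obtain ⟨a', ha', hca'⟩ := hc'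
  obtain ⟨_, _, _⟩ := ht
  obtain ⟨_, _, _⟩ := ht'
  simp only [centerResidues, mem_insert_iff, mem_singleton_iff] at ha ha'
  have : c - c' = a - a' := (hca.sub hca').eq_of_sub_lt_of_sub_lt (by omega) (by omega)
  omega

theorem exists_mem_centerSet_sub_mem_of_nonneg_of_lt {s : ℤ} (hs₀ : 0 ≤ s) (hs : s < 8 * (k + 1))
    (hsR : s ∉ removedResidues k) : ∃ c ∈ centerSet k, c - s ∈ puncturedInterval k := by
  simp only [removedResidues, mem_insert_iff, mem_singleton_iff, not_or] at hsR
  have hcenter : ∀ a ∈ centerResidues k, a - s ∈ puncturedInterval k →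
      ∃ c ∈ centerSet k, c - s ∈ puncturedInterval k :=
    fun a ha has => ⟨a, subset_residueClasses _ _ ha, has⟩
  rcases lt_or_ge s (k + 1) with h₁ | h₁
  · exact hcenter 0 (by simp [centerResidues]) ⟨by omega, by omega, by omega⟩
  rcases lt_or_ge s (3 * (k + 1)) with h₂ | h₂
  · exact hcenter (2 * (k + 1)) (by simp [centerResidues]) ⟨by omega, by omega, by omega⟩
  rcases lt_or_ge s (5 * (k + 1) + 1) with h₃ | h₃
  · exact hcenter (4 * (k + 1) + 1) (by simp [centerResidues]) ⟨by omega, by omega, by omega⟩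
  rcases lt_or_ge s (7 * (k + 1) + 1) with h₄ | h₄
  · exact hcenter (6 * (k + 1) + 1) (by simp [centerResidues]) ⟨by omega, by omega, by omega⟩
  · refine ⟨8 * (k + 1), ⟨0, by simp [centerResidues], Int.emod_self⟩, by omega, by omega, by omega⟩

theorem exists_mem_centerSet_sub_mem {v : ℤ} (hv : v ∉ removedSet k) :
    ∃ c ∈ centerSet k, c - v ∈ puncturedInterval k := by
  have hP : (0 : ℤ) < 8 * (k + 1) := by positivity
  have hvs : v ≡ v % (8 * (k + 1)) [ZMOD 8 * (k + 1)] := (Int.mod_modEq v _).symm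
  obtain ⟨c, hc, hcs⟩ := exists_mem_centerSet_sub_mem_of_nonneg_of_lt (Int.emod_nonneg v hP.ne')
    (Int.emod_lt_of_pos v hP) fun h => hv ⟨_, h, hvs⟩
  refine ⟨v + (c - v % (8 * (k + 1))), mem_residueClasses_of_modEq ?_ hc, by simpa using hcs⟩
  simpa using hvs.add_right (c - v % (8 * (k + 1)))

end OneDim

section Shear

variable {k : ℕ}

theorem exists_line_iff_shear_modEq (hmod : k % 8 = 4) (e : ℤ) {M : Set ℤ}
    (hM : ∀ m ∈ M, 0 ≤ m ∧ m < 8) (x y : ℤ) :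
    (∃ x' n : ℤ, (x, y) = (x', x' + n * (k + 1) + e) ∧ (x' - 2 * n) % 8 ∈ M) ↔
      ∃ m ∈ M, (k + 2) * y - x ≡ (m + e) * (k + 1) + e [ZMOD 8 * (k + 1)] := by
  obtain ⟨j, hj⟩ : ∃ j : ℤ, (k : ℤ) + 4 = 8 * j := ⟨(k + 4) / 8, by omega⟩
  constructor
  · rintro ⟨x, n, hxy, hxn⟩
    obtain ⟨rfl, rfl⟩ := Prod.mk.inj hxy
    refine ⟨_, hxn, ?_⟩
    calc (k + 2) * (x + n * (k + 1) + e) - x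
        = (x - 2 * n + e) * (k + 1) + e + 8 * (k + 1) * (n * j) := by
          linear_combination n * (k + 1) * hj
      _ ≡ (x - 2 * n + e) * (k + 1) + e [ZMOD 8 * (k + 1)] :=
          Int.modEq_iff_dvd.2 ⟨-(n * j), by ring⟩
      _ ≡ ((x - 2 * n) % 8 + e) * (k + 1) + e [ZMOD 8 * (k + 1)] :=
          (((Int.mod_modEq _ 8).symm.add_right e).mul_right').add_right e
  · rintro ⟨m, hm, hv⟩
    obtain ⟨q, hq⟩ := hv.dvd
    obtain ⟨W, hW⟩ : ∃ W, x - 2 * (m + e - 8 * q - y) = m + 8 * W :=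
      ⟨j * y - j * (m + e) + (k + 1) * q + 2 * q, by linear_combination hq + (y - m - e) * hj⟩
    refine ⟨x, m + e - 8 * q - y, by ext <;> simp only; linear_combination -hq, ?_⟩
    have := hM m hm
    rwa [show (x - 2 * (m + e - 8 * q - y)) % 8 = m by omega]

theorem mem_S1_union_S3_iff (hmod : k % 8 = 4) (p : ℤ × ℤ) :
    p ∈ S1 k ∪ S3 k ↔ (k + 2) * p.2 - p.1 ∈ removedSet k := by
  have h1 := exists_line_iff_shear_modEq hmod 0 (M := {0, 1, 2, 3}) (by simp) p.1 p.2
  have h3 := exists_line_iff_shear_modEq hmod 1 (M := {2, 3, 4, 5}) (by simp) p.1 p.2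
  simp only [add_zero] at h1
  rw [mem_union, S1, S3, mem_ofPred_eq, mem_ofPred_eq, h1, h3]
  simp [residueClasses, removedResidues, or_and_right, exists_or, or_assoc]

end Shear

theorem X2_tiled_by_horizontal_copies_general (k : ℕ) (hmod : k % 8 = 4) :
    ∃ 𝒞 : Set (Set (ℤ × ℤ)),
      (∀ C ∈ 𝒞, ∃ p : ℤ × ℤ, C = (fun t : ℤ => (p.1 + t, p.2)) '' puncturedInterval k) ∧
      𝒞.PairwiseDisjoint id ∧
      ⋃₀ 𝒞 = (S1 k ∪ S3 k)ᶜ := by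
  obtain ⟨𝒞, hcopies, hdisj, hunion⟩ := exists_horizontal_tiling_of_shear (k + 2)
    (X := (removedSet k)ᶜ) sub_notMem_removedSet exists_mem_centerSet_sub_mem
    centerSet_eq_of_sub_mem
  refine ⟨𝒞, hcopies, hdisj, hunion.trans ?_⟩
  ext p
  simp only [mem_ofPred_eq, mem_compl_iff, mem_S1_union_S3_iff hmod]

/-- For `k ≡ 4 (mod 8)`, the set `X₂ = ℤ² \ (S₁ ∪ S₃)` is a disjoint union of
horizontal copies of `T_k`. -/
theorem X2_tiled_by_horizontal_copies (k : ℕ) (hk : 0 < k) (hmod : k % 8 = 4) :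
    ∃ 𝒞 : Set (Set (ℤ × ℤ)),
      (∀ C ∈ 𝒞, ∃ p : ℤ × ℤ, C = (fun t : ℤ => (p.1 + t, p.2)) '' puncturedInterval k) ∧
      𝒞.PairwiseDisjoint id ∧
      ⋃₀ 𝒞 = (S1 k ∪ S3 k)ᶜ :=
  X2_tiled_by_horizontal_copies_general k hmod
end

section
/- Let k be a positive integer with k ≡ 4 (mod 8). Then the set X₂ = ℤ² \ (S₁ ∪ S₃) is invariant under translation by the vector (k+2, 1), i.e. (x, y) ∈ X₂ if and only if (x+k+2, y+1) ∈ X₂. -/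
/-! The translation by `(k + 2, 1)` sends `(x, x + n(k+1) + c)` to `(x', x' + (n-1)(k+1) + c)`
with `x' = x + k + 2`, and changes `x - 2n` by `k + 4 ≡ 0 (mod 8)`. So each of `S₁`, `S₃`,
and hence `X₂`, is invariant. -/

def shearSet (k : ℕ) (c : ℤ) (R : Set ℤ) : Set (ℤ × ℤ) :=
  {p | ∃ x n : ℤ, p = (x, x + n * ((k : ℤ) + 1) + c) ∧ (x - 2 * n) % 8 ∈ R}

lemma S1_eq_shearSet (k : ℕ) : S1 k = shearSet k 0 {0, 1, 2, 3} := by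
  simp only [S1, shearSet, add_zero]

lemma S3_eq_shearSet (k : ℕ) : S3 k = shearSet k 1 {2, 3, 4, 5} := rfl

lemma mem_shearSet_iff_add {k : ℕ} (hmod : k % 8 = 4) (c : ℤ) (R : Set ℤ) (x y : ℤ) :
    (x, y) ∈ shearSet k c R ↔ (x + (k : ℤ) + 2, y + 1) ∈ shearSet k c R := by
  constructor
  · rintro ⟨_, n, ⟨⟩, hR⟩
    refine ⟨x + k + 2, n - 1, Prod.ext rfl (by ring), ?_⟩
    rwa [show (x + k + 2 - 2 * (n - 1)) % 8 = (x - 2 * n) % 8 by omega]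
  · rintro ⟨a, n, h, hR⟩
    obtain ⟨hx, hy⟩ := Prod.mk.inj h
    refine ⟨x, n + 1, Prod.ext rfl (by linear_combination hy - hx), ?_⟩
    rwa [show (x - 2 * (n + 1)) % 8 = (a - 2 * n) % 8 by omega]

theorem X2_translation_invariant_general (k : ℕ) (hmod : k % 8 = 4) (x y : ℤ) :
    (x, y) ∈ (S1 k ∪ S3 k)ᶜ ↔ (x + (k : ℤ) + 2, y + 1) ∈ (S1 k ∪ S3 k)ᶜ := by
  simp only [Set.mem_compl_iff, Set.mem_union, S1_eq_shearSet, S3_eq_shearSet,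
    ← mem_shearSet_iff_add hmod]

/-- For `k ≡ 4 (mod 8)`, the set `X₂ = ℤ² \ (S₁ ∪ S₃)` is invariant under
translation by `(k+2, 1)`. -/
theorem X2_translation_invariant (k : ℕ) (hk : 0 < k) (hmod : k % 8 = 4) (x y : ℤ) :
    (x, y) ∈ (S1 k ∪ S3 k)ᶜ ↔ (x + (k : ℤ) + 2, y + 1) ∈ (S1 k ∪ S3 k)ᶜ :=
  X2_translation_invariant_general k hmod x y
end

section
/- For every positive integer k, the set {x ∈ ℤ : x mod 8(k+1) ∉ {0, 2(k+1)−1, 3(k+1)−1, 4(k+1)−1, 5(k+1)−1, 5(k+1), 6(k+1), 7(k+1)}} is a disjoint union of translates of T_k; explicitly, it is the disjoint union of the translates of T_k centred at the points congruent to 2(k+1)−1, 4(k+1)−1, 6(k+1) and 8(k+1) modulo 8(k+1). -/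
open Set

theorem Int.emod_sub_emod_of_abs_sub_lt {x y M : ℤ} (h : |x - y| < M) :
    x % M - y % M = x - y ∨ x % M - y % M = x - y + M ∨ x % M - y % M = x - y - M := by
  have hM : 0 < M := (abs_nonneg _).trans_lt h
  obtain ⟨hlo, hhi⟩ := abs_lt.mp h
  have hx₀ := Int.emod_nonneg x hM.ne'
  have hx₁ := Int.emod_lt_of_pos x hM
  have hy₀ := Int.emod_nonneg y hM.ne'
  have hy₁ := Int.emod_lt_of_pos y hM
  set D := x / M - y / M
  have hD : M * D = (x - y) - (x % M - y % M) := by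
    linear_combination Int.mul_ediv_add_emod x M - Int.mul_ediv_add_emod y M
  have hD₁ : D < 2 := lt_of_mul_lt_mul_left (by linarith) hM.le
  have hD₂ : -2 < D := lt_of_mul_lt_mul_left (by linarith) hM.le
  interval_cases D <;> omega

theorem mem_image_add_puncturedInterval {k : ℕ} {a x : ℤ} :
    x ∈ (fun t : ℤ => a + t) '' puncturedInterval k ↔ x ≠ a ∧ |x - a| ≤ k := by
  constructor
  · rintro ⟨t, ⟨ht, hlo, hhi⟩, rfl⟩
    dsimp only
    exact ⟨by omega, abs_le.mpr ⟨by omega, by omega⟩⟩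
  · rintro ⟨hne, hle⟩
    obtain ⟨hlo, hhi⟩ := abs_le.mp hle
    exact ⟨x - a, ⟨by omega, by omega, by omega⟩, by ring⟩

theorem pairwiseDisjoint_image_add_puncturedInterval {k : ℕ} {C : Set ℤ}
    (hC : ∀ a ∈ C, ∀ b ∈ C, |a - b| ≤ 2 * k → a = b) :
    C.PairwiseDisjoint (fun a : ℤ => (fun t : ℤ => a + t) '' puncturedInterval k) := by
  intro a ha b hb hab
  refine disjoint_left.mpr fun x hxa hxb => hab (hC a ha b hb ?_)
  obtain ⟨-, hxa⟩ := mem_image_add_puncturedInterval.mp hxa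
  obtain ⟨-, hxb⟩ := mem_image_add_puncturedInterval.mp hxb
  calc |a - b| = |(x - b) - (x - a)| := by rw [sub_sub_sub_cancel_left]
    _ ≤ |x - b| + |x - a| := abs_sub _ _
    _ ≤ 2 * k := by linarith

section RowTiling

variable {k : ℕ}

def IsRowCentreResidue (k : ℕ) (r : ℤ) : Prop :=
  r = 2 * ((k : ℤ) + 1) - 1 ∨ r = 4 * ((k : ℤ) + 1) - 1 ∨ r = 6 * ((k : ℤ) + 1) ∨ r = 0

def rowGapResidues (k : ℕ) : Set ℤ :=
  {0, 2 * ((k : ℤ) + 1) - 1, 3 * ((k : ℤ) + 1) - 1, 4 * ((k : ℤ) + 1) - 1,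
    5 * ((k : ℤ) + 1) - 1, 5 * ((k : ℤ) + 1), 6 * ((k : ℤ) + 1), 7 * ((k : ℤ) + 1)}

theorem IsRowCentreResidue.eq_of_abs_sub_le {a b : ℤ}
    (ha : IsRowCentreResidue k (a % (8 * ((k : ℤ) + 1))))
    (hb : IsRowCentreResidue k (b % (8 * ((k : ℤ) + 1)))) (hab : |a - b| ≤ 2 * k) : a = b := by
  have hres := Int.emod_sub_emod_of_abs_sub_lt (M := 8 * ((k : ℤ) + 1)) (hab.trans_lt (by omega))
  obtain ⟨hlo, hhi⟩ := abs_le.mp hab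
  unfold IsRowCentreResidue at ha hb
  omega

theorem IsRowCentreResidue.emod_notMem_rowGapResidues {a x : ℤ}
    (ha : IsRowCentreResidue k (a % (8 * ((k : ℤ) + 1)))) (hxa : x ≠ a) (hx : |x - a| ≤ k) :
    x % (8 * ((k : ℤ) + 1)) ∉ rowGapResidues k := by
  have hres := Int.emod_sub_emod_of_abs_sub_lt (M := 8 * ((k : ℤ) + 1)) (hx.trans_lt (by omega))
  obtain ⟨hlo, hhi⟩ := abs_le.mp hx
  have hx₀ := Int.emod_nonneg x (by omega : 8 * ((k : ℤ) + 1) ≠ 0)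
  have hx₁ := Int.emod_lt_of_pos x (by omega : 0 < 8 * ((k : ℤ) + 1))
  unfold IsRowCentreResidue at ha
  simp only [rowGapResidues, mem_insert_iff, mem_singleton_iff, not_or]
  omega

theorem exists_rowCentre_near_of_notMem_rowGapResidues {r : ℤ} (hr₀ : 0 ≤ r)
    (hr₁ : r < 8 * ((k : ℤ) + 1)) (hr : r ∉ rowGapResidues k) :
    ∃ c, (IsRowCentreResidue k c ∨ c = 8 * ((k : ℤ) + 1)) ∧ r ≠ c ∧ |r - c| ≤ k := by
  simp only [rowGapResidues, mem_insert_iff, mem_singleton_iff, not_or] at hr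
  have cover : r ≤ k ∨ (k < r ∧ r ≤ 3 * ((k : ℤ) + 1) - 2) ∨
      (3 * ((k : ℤ) + 1) - 2 < r ∧ r ≤ 5 * ((k : ℤ) + 1) - 2) ∨
      (5 * ((k : ℤ) + 1) - 2 < r ∧ r ≤ 7 * ((k : ℤ) + 1) - 1) ∨ 7 * ((k : ℤ) + 1) - 1 < r := by
    omega
  rcases cover with h | h | h | h | h
  · exact ⟨0, .inl (.inr (.inr (.inr rfl))), by omega, abs_le.mpr ⟨by omega, by omega⟩⟩
  · exact ⟨_, .inl (.inl rfl), by omega, abs_le.mpr ⟨by omega, by omega⟩⟩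
  · exact ⟨_, .inl (.inr (.inl rfl)), by omega, abs_le.mpr ⟨by omega, by omega⟩⟩
  · exact ⟨_, .inl (.inr (.inr (.inl rfl))), by omega, abs_le.mpr ⟨by omega, by omega⟩⟩
  · exact ⟨_, .inr rfl, by omega, abs_le.mpr ⟨by omega, by omega⟩⟩

theorem exists_rowCentre_near_of_emod_notMem_rowGapResidues {x : ℤ}
    (hx : x % (8 * ((k : ℤ) + 1)) ∉ rowGapResidues k) :
    ∃ a, IsRowCentreResidue k (a % (8 * ((k : ℤ) + 1))) ∧ x ≠ a ∧ |x - a| ≤ k := by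
  set M := 8 * ((k : ℤ) + 1)
  have hx₀ := Int.emod_nonneg x (by omega : M ≠ 0)
  have hx₁ := Int.emod_lt_of_pos x (by omega : 0 < M)
  obtain ⟨c, hc, hxc, hdist⟩ := exists_rowCentre_near_of_notMem_rowGapResidues hx₀ hx₁ hx
  obtain ⟨hlo, hhi⟩ := abs_le.mp hdist
  refine ⟨x - x % M + c, ?_, by omega, by rw [abs_le]; omega⟩
  have hres := Int.emod_sub_emod_of_abs_sub_lt (x := x - x % M + c) (y := x) (M := M)
    (by rw [abs_lt]; omega)
  have ha₀ := Int.emod_nonneg (x - x % M + c) (by omega : M ≠ 0)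
  have ha₁ := Int.emod_lt_of_pos (x - x % M + c) (by omega : 0 < M)
  unfold IsRowCentreResidue at hc ⊢
  omega

end RowTiling

theorem row_tiling_general (k : ℕ) :
    ({a : ℤ | a % (8 * ((k : ℤ) + 1)) = 2 * ((k : ℤ) + 1) - 1 ∨
        a % (8 * ((k : ℤ) + 1)) = 4 * ((k : ℤ) + 1) - 1 ∨
        a % (8 * ((k : ℤ) + 1)) = 6 * ((k : ℤ) + 1) ∨
        a % (8 * ((k : ℤ) + 1)) = 8 * ((k : ℤ) + 1) % (8 * ((k : ℤ) + 1))}).PairwiseDisjoint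
      (fun a : ℤ => (fun t : ℤ => a + t) '' puncturedInterval k) ∧
    ⋃ a ∈ {a : ℤ | a % (8 * ((k : ℤ) + 1)) = 2 * ((k : ℤ) + 1) - 1 ∨
        a % (8 * ((k : ℤ) + 1)) = 4 * ((k : ℤ) + 1) - 1 ∨
        a % (8 * ((k : ℤ) + 1)) = 6 * ((k : ℤ) + 1) ∨
        a % (8 * ((k : ℤ) + 1)) = 8 * ((k : ℤ) + 1) % (8 * ((k : ℤ) + 1))},
      (fun t : ℤ => a + t) '' puncturedInterval k =
    {x : ℤ | x % (8 * ((k : ℤ) + 1)) ∉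
      ({0, 2 * ((k : ℤ) + 1) - 1, 3 * ((k : ℤ) + 1) - 1, 4 * ((k : ℤ) + 1) - 1,
        5 * ((k : ℤ) + 1) - 1, 5 * ((k : ℤ) + 1), 6 * ((k : ℤ) + 1),
        7 * ((k : ℤ) + 1)} : Set ℤ)} := by
  simp only [Int.emod_self]
  refine ⟨pairwiseDisjoint_image_add_puncturedInterval fun _ ha _ hb =>
    IsRowCentreResidue.eq_of_abs_sub_le ha hb, ?_⟩
  ext x
  simp only [mem_iUnion₂, mem_image_add_puncturedInterval, exists_prop]
  constructor
  · rintro ⟨a, ha, hxa, hx⟩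
    exact IsRowCentreResidue.emod_notMem_rowGapResidues ha hxa hx
  · exact exists_rowCentre_near_of_emod_notMem_rowGapResidues

/-- The set of integers `x` with
`x mod 8(k+1) ∉ {0, 2(k+1)-1, 3(k+1)-1, 4(k+1)-1, 5(k+1)-1, 5(k+1), 6(k+1), 7(k+1)}`
is the disjoint union of the translates of `T_k` centred at the points congruent to
`2(k+1)-1`, `4(k+1)-1`, `6(k+1)` and `8(k+1)` modulo `8(k+1)`. -/
theorem row_tiling (k : ℕ) (hk : 0 < k) :
    ({a : ℤ | a % (8 * ((k : ℤ) + 1)) = 2 * ((k : ℤ) + 1) - 1 ∨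
        a % (8 * ((k : ℤ) + 1)) = 4 * ((k : ℤ) + 1) - 1 ∨
        a % (8 * ((k : ℤ) + 1)) = 6 * ((k : ℤ) + 1) ∨
        a % (8 * ((k : ℤ) + 1)) = 8 * ((k : ℤ) + 1) % (8 * ((k : ℤ) + 1))}).PairwiseDisjoint
      (fun a : ℤ => (fun t : ℤ => a + t) '' puncturedInterval k) ∧
    ⋃ a ∈ {a : ℤ | a % (8 * ((k : ℤ) + 1)) = 2 * ((k : ℤ) + 1) - 1 ∨
        a % (8 * ((k : ℤ) + 1)) = 4 * ((k : ℤ) + 1) - 1 ∨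
        a % (8 * ((k : ℤ) + 1)) = 6 * ((k : ℤ) + 1) ∨
        a % (8 * ((k : ℤ) + 1)) = 8 * ((k : ℤ) + 1) % (8 * ((k : ℤ) + 1))},
      (fun t : ℤ => a + t) '' puncturedInterval k =
    {x : ℤ | x % (8 * ((k : ℤ) + 1)) ∉
      ({0, 2 * ((k : ℤ) + 1) - 1, 3 * ((k : ℤ) + 1) - 1, 4 * ((k : ℤ) + 1) - 1,
        5 * ((k : ℤ) + 1) - 1, 5 * ((k : ℤ) + 1), 6 * ((k : ℤ) + 1),
        7 * ((k : ℤ) + 1)} : Set ℤ)} :=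
  row_tiling_general k
end

section
/- For every integer k ≥ 2 and every d ≥ 1, ℤ^d cannot be partitioned into pairwise disjoint k-strings. (Indeed, every k-string intersects the box {1, …, k+1}^d in either 0 or exactly k points, and (k+1)^d is not divisible by k.) -/
/-- A `k`-string in `ℤ^d`: a coordinate line with every `(k+1)`-th point removed,
i.e. `{a + t·e_i : t ∈ ℤ, t ≢ r (mod k+1)}`. -/
def IsKString (k : ℕ) {d : ℕ} (L : Set (Fin d → ℤ)) : Prop :=
  ∃ (a : Fin d → ℤ) (i : Fin d) (r : ℤ),
    L = {p : Fin d → ℤ | ∃ t : ℤ, ¬ t ≡ r [ZMOD ((k : ℤ) + 1)] ∧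
      p = a + t • Pi.single i (1 : ℤ)}

/-!
Every `k`-string meets the cube `{0, …, k}^d` in either no point or exactly `k` points: its line
meets the cube in `k + 1` consecutive points, exactly one of which lies in the removed residue
class. A tiling by `k`-strings therefore splits the `(k + 1)^d` points of the cube into blocks of
size `k`, which is impossible since `(k + 1)^d ≡ 1 [MOD k]`.
-/

open Finset

open scoped Classical in
theorem dvd_card_of_pairwiseDisjoint_of_sUnion_eq_univ {α : Type*} {𝒞 : Set (Set α)}
    (hdisj : 𝒞.PairwiseDisjoint id) (hcover : ⋃₀ 𝒞 = Set.univ) (B : Finset α) {k : ℕ}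
    (hk : ∀ L ∈ 𝒞, k ∣ #{p ∈ B | p ∈ L}) : k ∣ #B := by
  have hblock : ∀ p, ∃ L ∈ 𝒞, p ∈ L := fun p => Set.mem_sUnion.1 (hcover ▸ Set.mem_univ p)
  choose f hf𝒞 hfmem using hblock
  have hfiber (p : α) {L : Set α} (hL : L ∈ 𝒞) : f p = L ↔ p ∈ L :=
    ⟨fun h => h ▸ hfmem p,
      fun hp => hdisj.elim (hf𝒞 p) hL (Set.not_disjoint_iff.2 ⟨p, hfmem p, hp⟩)⟩
  rw [card_eq_sum_card_image f B]
  refine dvd_sum fun L hL => ?_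
  obtain ⟨p, -, rfl⟩ := mem_image.1 hL
  rw [filter_congr fun q _ => hfiber q (hf𝒞 p)]
  exact hk _ (hf𝒞 p)

theorem IsKString.exists_eq_setOf {k d : ℕ} {L : Set (Fin d → ℤ)} (h : IsKString k L) :
    ∃ (a : Fin d → ℤ) (i : Fin d) (r : ℤ),
      L = {p | (∀ j ≠ i, p j = a j) ∧ ¬ p i ≡ r [ZMOD (k : ℤ) + 1]} := by
  obtain ⟨a, i, r, rfl⟩ := h
  refine ⟨a, i, a i + r, Set.ext fun p => ⟨?_, fun ⟨hoff, hi⟩ => ⟨p i - a i, ?_, ?_⟩⟩⟩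
  · rintro ⟨t, ht, rfl⟩
    refine ⟨fun j hj => by simp [hj], ?_⟩
    simpa [Int.ModEq] using fun h => ht (Int.ModEq.add_left_cancel' (a i) h)
  · exact fun h => hi (by simpa using h.add_left (a i))
  · funext j
    by_cases hj : j = i
    · subst hj; simp
    · simp [hoff j hj, hj]

theorem card_Icc_filter_not_modEq (k : ℕ) (r : ℤ) :
    #{t ∈ Icc (0 : ℤ) k | ¬ t ≡ r [ZMOD (k : ℤ) + 1]} = k := by
  have hpos : (0 : ℤ) < k + 1 := by positivity
  have hunique : {t ∈ Icc (0 : ℤ) k | t ≡ r [ZMOD (k : ℤ) + 1]} = {r % (k + 1)} := by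
    ext t
    simp only [mem_filter, mem_Icc, mem_singleton]
    unfold Int.ModEq
    constructor
    · rintro ⟨⟨h0, hle⟩, h⟩
      rwa [Int.emod_eq_of_lt h0 (by omega)] at h
    · rintro rfl
      exact ⟨⟨Int.emod_nonneg _ hpos.ne', by linarith [Int.emod_lt_of_pos r hpos]⟩,
        Int.emod_emod _ _⟩
  rw [filter_not, card_sdiff_of_subset (filter_subset _ _), hunique, card_singleton, Int.card_Icc]
  omega

noncomputable def cube (k d : ℕ) : Finset (Fin d → ℤ) := Fintype.piFinset fun _ => Icc 0 k

theorem card_cube (k d : ℕ) : #(cube k d) = (k + 1) ^ d := by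
  simp [cube, Fintype.card_piFinset]

theorem mem_cube {k d : ℕ} {p : Fin d → ℤ} : p ∈ cube k d ↔ ∀ j, p j ∈ Icc 0 (k : ℤ) :=
  Fintype.mem_piFinset

theorem card_cube_filter_line (k : ℕ) {d : ℕ} (a : Fin d → ℤ) (i : Fin d) (r : ℤ) :
    #{p ∈ cube k d | (∀ j ≠ i, p j = a j) ∧ ¬ p i ≡ r [ZMOD (k : ℤ) + 1]} = 0 ∨
      #{p ∈ cube k d | (∀ j ≠ i, p j = a j) ∧ ¬ p i ≡ r [ZMOD (k : ℤ) + 1]} = k := by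
  by_cases ha : ∀ j ≠ i, a j ∈ Icc 0 (k : ℤ)
  · right
    refine (card_nbij' (· i) (Function.update a i) ?_ ?_ ?_ ?_).trans
      (card_Icc_filter_not_modEq k r)
    · intro p hp
      simp_all [mem_cube]
    · intro t ht
      simp only [coe_filter, mem_cube] at ht ⊢
      refine ⟨fun j => ?_, fun j hj => Function.update_of_ne hj _ _, by simpa using ht.2⟩
      by_cases hj : j = i
      · subst hj; simpa using ht.1
      · simpa [hj] using ha j hj
    · intro p hp
      simp only [coe_filter] at hp
      exact Function.update_eq_iff.2 ⟨rfl, fun j hj => (hp.2.1 j hj).symm⟩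
    · intro t _
      simp
  · left
    push Not at ha
    obtain ⟨j, hj, hja⟩ := ha
    refine card_eq_zero.2 (filter_eq_empty_iff.2 fun p hp hpL => hja ?_)
    exact hpL.1 j hj ▸ mem_cube.1 hp j

open scoped Classical in
theorem IsKString.card_cube_filter_mem {k d : ℕ} {L : Set (Fin d → ℤ)} (h : IsKString k L) :
    #{p ∈ cube k d | p ∈ L} = 0 ∨ #{p ∈ cube k d | p ∈ L} = k := by
  obtain ⟨a, i, r, rfl⟩ := h.exists_eq_setOf
  convert card_cube_filter_line k a i r using 4 <;> exact Iff.rfl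

theorem no_string_tiling_general (k d : ℕ) (hk : 2 ≤ k) :
    ¬ ∃ 𝒞 : Set (Set (Fin d → ℤ)),
        (∀ L ∈ 𝒞, IsKString k L) ∧ 𝒞.PairwiseDisjoint id ∧
        ⋃₀ 𝒞 = (Set.univ : Set (Fin d → ℤ)) := by
  rintro ⟨𝒞, hstr, hdisj, hcover⟩
  have hdvd : k ∣ (k + 1) ^ d := by
    rw [← card_cube k d]
    refine dvd_card_of_pairwiseDisjoint_of_sUnion_eq_univ hdisj hcover _ fun L hL => ?_
    rcases (hstr L hL).card_cube_filter_mem with h | h <;> simp [h]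
  have hk1 : k = 1 :=
    Nat.dvd_one.1 (by simpa using ((Nat.add_modEq_left.pow d).dvd_iff dvd_rfl).1 hdvd)
  omega

/-- For `k ≥ 2` and `d ≥ 1`, `ℤ^d` cannot be partitioned into pairwise disjoint
`k`-strings. -/
theorem no_string_tiling (k d : ℕ) (hk : 2 ≤ k) (hd : 1 ≤ d) :
    ¬ ∃ 𝒞 : Set (Set (Fin d → ℤ)),
        (∀ L ∈ 𝒞, IsKString k L) ∧ 𝒞.PairwiseDisjoint id ∧
        ⋃₀ 𝒞 = (Set.univ : Set (Fin d → ℤ)) :=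
  no_string_tiling_general k d hk
end
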